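/- Let f : ℝ^n → ℝ be twice continuously differentiable in a neighborhood of x*, where ∇f(x*) = 0 and the Hessian ∇²f(x*) is positive definite. Let (B_k) be a sequence of invertible n × n real matrices with ‖B_k − ∇²f(x_k)‖ → 0 in operator norm, and let (x_k) be generated by x_{k+1} = x_k + p_k with p_k = −B_k⁻¹ ∇f(x_k), p_k ≠ 0 for all k, and suppose x_k → x*. Then (x_k) converges to x* superlinearly: ‖x_{k+1} − x*‖ / ‖x_k − x*‖ → 0. -/

import Mathlib

/-!
Write `e_k = x_k - x*`, `g = ∇f` and `H = ∇²f(x*)`. The step equation `B_k p_k = -g(x_k)` gives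
`B_k e_{k+1} = (B_k - H) e_k - (g(x_k) - H e_k)`. The first term is `o(e_k)` because `B_k → H`
(the Hessian is continuous at `x*`), the second is `o(e_k)` because `g` is differentiable at `x*`
with `g(x*) = 0`. As `H` is positive definite, hence invertible, the inverses `B_k⁻¹` are
eventually defined and bounded, so `e_{k+1} = o(e_k)`.
-/

open Filter Topology Asymptotics
open scoped InnerProductSpace

section ApplyAsymptotics

variable {α 𝕜 E F : Type*} [NontriviallyNormedField 𝕜] [NormedAddCommGroup E] [NormedSpace 𝕜 E]
  [NormedAddCommGroup F] [NormedSpace 𝕜 F] {l : Filter α} {A : α → E →L[𝕜] F}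

theorem ContinuousLinearMap.isLittleO_apply_of_tendsto_zero (hA : Tendsto A l (𝓝 0))
    (v : α → E) : (fun a => A a (v a)) =o[l] v :=
  isLittleO_iff.2 fun _ hc => by
    filter_upwards [(tendsto_zero_iff_norm_tendsto_zero.1 hA).eventually (ge_mem_nhds hc)]
      with a ha
    exact (A a).le_of_opNorm_le ha (v a)

theorem ContinuousLinearMap.isBigO_apply_of_tendsto {L : E →L[𝕜] F} (hA : Tendsto A l (𝓝 L))
    (v : α → E) : (fun a => A a (v a)) =O[l] v :=
  isBigO_iff.2 ⟨‖L‖ + 1, by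
    filter_upwards [hA.norm.eventually (ge_mem_nhds (lt_add_one ‖L‖))] with a ha
    exact (A a).le_of_opNorm_le ha (v a)⟩

end ApplyAsymptotics

theorem isLittleO_succ_sub_of_quasiNewton {𝕜 E : Type*} [NontriviallyNormedField 𝕜]
    [NormedAddCommGroup E] [NormedSpace 𝕜 E] [CompleteSpace E] {g : E → E} {L : E →L[𝕜] E}
    {xs : E} (hL : IsUnit L) (hg : HasFDerivAt g L xs) (hg0 : g xs = 0) {B : ℕ → E →L[𝕜] E}
    (hB : Tendsto B atTop (𝓝 L)) {x : ℕ → E} (hx : Tendsto x atTop (𝓝 xs))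
    (hstep : ∀ᶠ k in atTop, B k (x (k + 1) - x k) = -g (x k)) :
    (fun k => x (k + 1) - xs) =o[atTop] (fun k => x k - xs) := by
  have hinv : Tendsto (fun k => Ring.inverse (B k)) atTop (𝓝 (Ring.inverse L)) := by
    have := NormedRing.inverse_continuousAt hL.unit
    rw [hL.unit_spec] at this
    exact this.tendsto.comp hB
  have hlin : (fun k => g (x k) - L (x k - xs)) =o[atTop] (fun k => x k - xs) := by
    simpa only [hg0, sub_zero, Function.comp_def] using hg.isLittleO.comp_tendsto hx
  have hres : (fun k => B k (x (k + 1) - xs)) =o[atTop] (fun k => x k - xs) := by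
    refine ((ContinuousLinearMap.isLittleO_apply_of_tendsto_zero
      (tendsto_sub_nhds_zero_iff.2 hB) _).sub hlin).congr' ?_ EventuallyEq.rfl
    filter_upwards [hstep] with k hk
    rw [show x (k + 1) - xs = (x k - xs) + (x (k + 1) - x k) by abel, map_add, hk,
      sub_apply]
    abel
  have hback : (fun k => Ring.inverse (B k) (B k (x (k + 1) - xs))) =ᶠ[atTop]
      (fun k => x (k + 1) - xs) := by
    filter_upwards [hB.eventually (Units.isOpen.mem_nhds hL)] with k hk
    rw [← mul_apply_eq_comp, Ring.inverse_mul_cancel _ hk, one_apply_eq_self]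
  exact ((ContinuousLinearMap.isBigO_apply_of_tendsto hinv _).trans_isLittleO hres).congr'
    hback EventuallyEq.rfl

theorem ContinuousLinearMap.isUnit_of_inner_map_self_pos {E : Type*} [NormedAddCommGroup E]
    [InnerProductSpace ℝ E] [FiniteDimensional ℝ E] {L : E →L[ℝ] E}
    (hL : ∀ v, v ≠ 0 → 0 < ⟪v, L v⟫_ℝ) : IsUnit L := by
  have hinj : Function.Injective L := by
    refine (injective_iff_map_eq_zero L).2 fun v hv => ?_
    by_contra hv0
    simpa [hv] using hL v hv0
  exact L.isUnit_iff_bijective.2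
    ⟨hinj, LinearMap.injective_iff_surjective (f := (L : E →ₗ[ℝ] E)).1 hinj⟩

theorem ContDiffAt.gradient {F : Type*} [NormedAddCommGroup F] [InnerProductSpace ℝ F]
    [CompleteSpace F] {f : F → ℝ} {x : F} {m : WithTop ℕ∞} (hf : ContDiffAt ℝ (m + 1) f x) :
    ContDiffAt ℝ m (gradient f) x :=
  (InnerProductSpace.toDual ℝ F).symm.toContinuousLinearEquiv.contDiff.contDiffAt.comp x
    (hf.fderiv_right le_rfl)

theorem Matrix.toEuclideanCLM_toEuclideanLin_inv_apply {𝕜 n : Type*} [RCLike 𝕜] [Fintype n]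
    [DecidableEq n] {A : Matrix n n 𝕜} (hA : IsUnit A) (v : EuclideanSpace 𝕜 n) :
    Matrix.toEuclideanCLM (𝕜 := 𝕜) A (Matrix.toEuclideanLin A⁻¹ v) = v := by
  change Matrix.toEuclideanCLM (𝕜 := 𝕜) A (Matrix.toEuclideanCLM (𝕜 := 𝕜) A⁻¹ v) = v
  rw [← mul_apply_eq_comp, ← map_mul, Matrix.mul_nonsing_inv _
    ((Matrix.isUnit_iff_isUnit_det _).mp hA), map_one, one_apply_eq_self]

theorem superlinear_of_hessian_approx_general {n : ℕ} (f : EuclideanSpace ℝ (Fin n) → ℝ)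
    (xs : EuclideanSpace ℝ (Fin n))
    (U : Set (EuclideanSpace ℝ (Fin n))) (hU : U ∈ 𝓝 xs)
    (hf : ContDiffOn ℝ 2 f U)
    (hgrad0 : gradient f xs = 0)
    (hHessPos : ∀ v : EuclideanSpace ℝ (Fin n), v ≠ 0 →
      0 < ⟪v, fderiv ℝ (gradient f) xs v⟫_ℝ)
    (B : ℕ → Matrix (Fin n) (Fin n) ℝ)
    (x p : ℕ → EuclideanSpace ℝ (Fin n))
    (hBconv : Tendsto
      (fun k => ‖Matrix.toEuclideanCLM (𝕜 := ℝ) (B k) - fderiv ℝ (gradient f) (x k)‖)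
      atTop (𝓝 0))
    (hp : ∀ k, p k = -(Matrix.toEuclideanLin (B k)⁻¹ (gradient f (x k))))
    (hiter : ∀ k, x (k + 1) = x k + p k)
    (hconv : Tendsto x atTop (𝓝 xs)) :
    Tendsto (fun k => ‖x (k + 1) - xs‖ / ‖x k - xs‖) atTop (𝓝 0) := by
  have hg : ContDiffAt ℝ 1 (gradient f) xs := (hf.contDiffAt hU).gradient
  have hHunit : IsUnit (fderiv ℝ (gradient f) xs) :=
    ContinuousLinearMap.isUnit_of_inner_map_self_pos hHessPos
  have hBH : Tendsto (fun k => Matrix.toEuclideanCLM (𝕜 := ℝ) (B k)) atTop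
      (𝓝 (fderiv ℝ (gradient f) xs)) := by
    simpa using (tendsto_zero_iff_norm_tendsto_zero.2 hBconv).add
      ((hg.fderiv_right (m := 0) (zero_add 1).le).continuousAt.tendsto.comp hconv)
  have hstep : ∀ᶠ k in atTop,
      Matrix.toEuclideanCLM (𝕜 := ℝ) (B k) (x (k + 1) - x k) = -gradient f (x k) := by
    filter_upwards [hBH.eventually (Units.isOpen.mem_nhds hHunit)] with k hk
    rw [hiter k, add_sub_cancel_left, hp k, map_neg,
      Matrix.toEuclideanCLM_toEuclideanLin_inv_apply ((isUnit_map_iff _ _).1 hk)]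
  exact (isLittleO_succ_sub_of_quasiNewton hHunit (hg.differentiableAt one_ne_zero).hasFDerivAt
    hgrad0 hBH hconv hstep).norm_norm.tendsto_div_nhds_zero

/-- If `‖B_k - ∇²f(x_k)‖ → 0` in operator norm, then the iteration
`x_{k+1} = x_k - B_k⁻¹ ∇f(x_k)` converging to a minimizer `x*` with positive definite
Hessian converges superlinearly. -/
theorem superlinear_of_hessian_approx {n : ℕ} (f : EuclideanSpace ℝ (Fin n) → ℝ)
    (xs : EuclideanSpace ℝ (Fin n))
    (U : Set (EuclideanSpace ℝ (Fin n))) (hU : U ∈ 𝓝 xs)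
    (hf : ContDiffOn ℝ 2 f U)
    (hgrad0 : gradient f xs = 0)
    (hHessPos : ∀ v : EuclideanSpace ℝ (Fin n), v ≠ 0 →
      0 < ⟪v, fderiv ℝ (gradient f) xs v⟫_ℝ)
    (B : ℕ → Matrix (Fin n) (Fin n) ℝ) (hBinv : ∀ k, IsUnit (B k))
    (x p : ℕ → EuclideanSpace ℝ (Fin n))
    (hBconv : Tendsto
      (fun k => ‖Matrix.toEuclideanCLM (𝕜 := ℝ) (B k) - fderiv ℝ (gradient f) (x k)‖)
      atTop (𝓝 0))
    (hp : ∀ k, p k = -(Matrix.toEuclideanLin (B k)⁻¹ (gradient f (x k))))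
    (hpne : ∀ k, p k ≠ 0)
    (hiter : ∀ k, x (k + 1) = x k + p k)
    (hconv : Tendsto x atTop (𝓝 xs)) :
    Tendsto (fun k => ‖x (k + 1) - xs‖ / ‖x k - xs‖) atTop (𝓝 0) :=
  superlinear_of_hessian_approx_general f xs U hU hf hgrad0 hHessPos B x p hBconv hp hiter hconv
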